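/- (Proposition 1, optimality) Let N ≥ 2, 1/N = p_l < p_h < 1, integers 1 ≤ t < T, and suppose the linear program is feasible. Let k̄ = min{k′ : ((T−t)/T)·Σ_{k ≤ k′} [τ_d·μ(k;t) − τ_c·λ(k;t)] ≥ τ_d − τ_c} and let f* be the threshold rule with f*(k) = 1 for k < k̄, f*(k̄) = [ (T/(T−t))·(τ_d − τ_c) − Σ_{k=0}^{k̄−1} (τ_d·μ(k;t) − τ_c·λ(k;t)) ] / (τ_d·μ(k̄;t) − τ_c·λ(k̄;t)), and f*(k) = 0 for k > k̄. Then for every feasible intervention rule f : {0,…,t} → [0,1], Σ_{k=0}^t λ(k;t) f*(k) ≤ Σ_{k=0}^t λ(k;t) f(k); that is, f* is an optimal solution of the linear program. -/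

import Mathlib

/-!
The linear program is a fractional knapsack: minimise `∑ λ(k) f(k)` subject to
`∑ b(k) f(k) ≥ R` and `0 ≤ f ≤ 1`, where `b = τ_d μ − τ_c λ` and `R = T/(T−t) · (τ_d − τ_c)`.
A deviator makes an idle slot less likely than a cooperator, so by the monotone likelihood
ratio of the binomial family the ratio `b(k) / λ(k)` decreases in `k`. Hence the greedy rule,
which takes the indices `k = 0, 1, …` in turn until the constraint binds, is optimal by an
exchange argument.
-/

open Finset

/-- `lam N t pl k` is the probability of `k` idle signals out of `t` when all `N`
users transmit with probability `pl`. -/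
noncomputable def lam (N t : ℕ) (pl : ℝ) (k : ℕ) : ℝ :=
  (t.choose k : ℝ) * ((1 - pl) ^ N) ^ k * (1 - (1 - pl) ^ N) ^ (t - k)

/-- `mu N t pl ph k` is the probability of `k` idle signals out of `t` when exactly
one user transmits with probability `ph` and the others with `pl`. -/
noncomputable def mu (N t : ℕ) (pl ph : ℝ) (k : ℕ) : ℝ :=
  (t.choose k : ℝ) * ((1 - pl) ^ (N - 1) * (1 - ph)) ^ k *
    (1 - (1 - pl) ^ (N - 1) * (1 - ph)) ^ (t - k)

/-- The cooperation throughput `τ_c = pl (1 - pl)^{N-1}`. -/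
noncomputable def tauC (N : ℕ) (pl : ℝ) : ℝ := pl * (1 - pl) ^ (N - 1)

/-- The defection throughput `τ_d = ph (1 - pl)^{N-1}`. -/
noncomputable def tauD (N : ℕ) (pl ph : ℝ) : ℝ := ph * (1 - pl) ^ (N - 1)

/-- `f : {0,…,t} → [0,1]` is an intervention rule. -/
def IsRule (t : ℕ) (f : ℕ → ℝ) : Prop := ∀ k ≤ t, 0 ≤ f k ∧ f k ≤ 1

/-- The left-hand side of the incentive constraint:
`((T−t)/T) · Σ_{k=0}^t [τ_d μ(k;t) − τ_c λ(k;t)] f(k)`. -/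
noncomputable def incLHS (N t T : ℕ) (pl ph : ℝ) (f : ℕ → ℝ) : ℝ :=
  (((T : ℝ) - t) / T) * ∑ k ∈ Finset.range (t + 1),
    (tauD N pl ph * mu N t pl ph k - tauC N pl * lam N t pl k) * f k

/-- A feasible solution of the linear program: an intervention rule satisfying the
incentive constraint. -/
def Feasible (N t T : ℕ) (pl ph : ℝ) (f : ℕ → ℝ) : Prop :=
  IsRule t f ∧ incLHS N t T pl ph f ≥ tauD N pl ph - tauC N pl

/-- The objective of the linear program: the expected transmission probability of the
intervention device under cooperation, `Σ_{k=0}^t λ(k;t) f(k)`. -/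
noncomputable def objective (N t : ℕ) (pl : ℝ) (f : ℕ → ℝ) : ℝ :=
  ∑ k ∈ Finset.range (t + 1), lam N t pl k * f k

/-- The threshold intervention rule of Proposition 1: `f*(k) = 1` for `k < k̄`,
`f*(k) = 0` for `k > k̄`, and at `k = k̄` the value making the incentive constraint
bind. -/
noncomputable def thresholdRule (N t T : ℕ) (pl ph : ℝ) (kbar : ℕ) : ℕ → ℝ :=
  fun k =>
    if k < kbar then 1
    else if k = kbar then
      ((T : ℝ) / ((T : ℝ) - t) * (tauD N pl ph - tauC N pl) -
          ∑ j ∈ Finset.range kbar,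
            (tauD N pl ph * mu N t pl ph j - tauC N pl * lam N t pl j)) /
        (tauD N pl ph * mu N t pl ph kbar - tauC N pl * lam N t pl kbar)
    else 0

noncomputable def binomWeight (t : ℕ) (q : ℝ) (k : ℕ) : ℝ :=
  (t.choose k : ℝ) * q ^ k * (1 - q) ^ (t - k)

section Binomial

variable {t k m : ℕ} {p q : ℝ}

lemma binomWeight_nonneg (h0 : 0 ≤ q) (h1 : q ≤ 1) : 0 ≤ binomWeight t q k :=
  mul_nonneg (by positivity) (pow_nonneg (sub_nonneg.2 h1) _)

/-- Monotone likelihood ratio of the binomial family. -/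
lemma binomWeight_mul_le_mul (hq : 0 ≤ q) (hqp : q ≤ p) (hp : p ≤ 1) (hkm : k ≤ m)
    (hmt : m ≤ t) :
    binomWeight t q m * binomWeight t p k ≤ binomWeight t q k * binomWeight t p m := by
  obtain ⟨d, rfl⟩ := Nat.exists_eq_add_of_le hkm
  have hsplit : t - k = (t - (k + d)) + d := by omega
  set common := (t.choose k : ℝ) * (t.choose (k + d) : ℝ) * q ^ k * p ^ k *
    (1 - q) ^ (t - (k + d)) * (1 - p) ^ (t - (k + d))
  have hcommon : 0 ≤ common := by
    have := sub_nonneg.2 hp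
    have := sub_nonneg.2 (hqp.trans hp)
    have := hq.trans hqp
    positivity
  calc binomWeight t q (k + d) * binomWeight t p k = common * (q * (1 - p)) ^ d := by
        simp only [binomWeight, hsplit, mul_pow, common]; ring
    _ ≤ common * (p * (1 - q)) ^ d := by
        gcongr
        nlinarith
    _ = binomWeight t q k * binomWeight t p (k + d) := by
        simp only [binomWeight, hsplit, mul_pow, common]; ring

end Binomial

noncomputable def greedyRule (b : ℕ → ℝ) (R : ℝ) (kbar : ℕ) : ℕ → ℝ := fun k =>
  if k < kbar then 1 else if k = kbar then (R - ∑ j ∈ range kbar, b j) / b kbar else 0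

section FractionalKnapsack

variable {t kbar : ℕ} {a b f : ℕ → ℝ} {R : ℝ}

lemma greedyRule_isRule (hlt : ∑ j ∈ range kbar, b j < R)
    (hle : R ≤ ∑ j ∈ range (kbar + 1), b j) : IsRule t (greedyRule b R kbar) := by
  rw [sum_range_succ] at hle
  have hb : 0 < b kbar := by linarith
  intro k _
  unfold greedyRule
  split_ifs
  · norm_num
  · exact ⟨div_nonneg (by linarith) hb.le, (div_le_one hb).2 (by linarith)⟩
  · norm_num

lemma sum_mul_greedyRule (hkt : kbar ≤ t) (hb : b kbar ≠ 0) :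
    ∑ k ∈ range (t + 1), b k * greedyRule b R kbar k = R := by
  have hzero : ∀ k ∈ range (t + 1), k ∉ range (kbar + 1) → b k * greedyRule b R kbar k = 0 := by
    intro k _ hk
    simp only [mem_range] at hk
    simp [greedyRule, show ¬ k < kbar by omega, show k ≠ kbar by omega]
  have hlow : ∑ k ∈ range kbar, b k * greedyRule b R kbar k = ∑ k ∈ range kbar, b k :=
    sum_congr rfl fun k hk => by simp [greedyRule, mem_range.1 hk]
  rw [← sum_subset (range_subset_range.2 (by omega)) hzero, sum_range_succ, hlow]
  simp only [greedyRule, lt_irrefl, if_false, if_true]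
  field_simp
  ring

/-- The exchange argument: termwise, `a kbar * b k * (f k - g k) ≤ b kbar * a k * (f k - g k)`,
because `f - g` is `≤ 0` below `kbar`, where `b / a` is large, and `≥ 0` above it. -/
lemma sum_mul_greedyRule_le (hkt : kbar ≤ t) (ha : 0 ≤ a kbar) (hb : 0 < b kbar)
    (hratio : ∀ k m, k ≤ m → m ≤ t → b m * a k ≤ b k * a m) (hf : IsRule t f)
    (hbf : ∑ k ∈ range (t + 1), b k * greedyRule b R kbar k ≤ ∑ k ∈ range (t + 1), b k * f k) :
    ∑ k ∈ range (t + 1), a k * greedyRule b R kbar k ≤ ∑ k ∈ range (t + 1), a k * f k := by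
  set g := greedyRule b R kbar
  have hterm : ∀ k ∈ range (t + 1),
      a kbar * (b k * (f k - g k)) ≤ b kbar * (a k * (f k - g k)) := by
    intro k hk
    have hkt' : k ≤ t := Nat.lt_succ_iff.1 (mem_range.1 hk)
    rcases lt_trichotomy k kbar with h | rfl | h
    · have hd : f k - g k ≤ 0 := by simp [g, greedyRule, h, (hf k hkt').2]
      nlinarith [mul_le_mul_of_nonpos_right (hratio k kbar h.le hkt) hd]
    · exact (mul_left_comm _ _ _).le
    · have hd : 0 ≤ f k - g k := by
        simp [g, greedyRule, h.ne', h.not_gt, (hf k hkt').1]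
      nlinarith [mul_le_mul_of_nonneg_right (hratio kbar k h.le hkt') hd]
  have hsum := sum_le_sum hterm
  simp only [← mul_sum, mul_sub, sum_sub_distrib] at hsum
  have : 0 ≤ b kbar * (∑ k ∈ range (t + 1), a k * f k - ∑ k ∈ range (t + 1), a k * g k) := by
    rw [mul_sub]
    nlinarith
  linarith [(mul_nonneg_iff_of_pos_left hb).1 this]

theorem greedyRule_optimal (hR : 0 < R) (ha : ∀ k ≤ t, 0 ≤ a k) (hb : ∀ k, t < k → b k = 0)
    (hratio : ∀ k m, k ≤ m → m ≤ t → b m * a k ≤ b k * a m)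
    (hkbar : R ≤ ∑ k ∈ range (kbar + 1), b k)
    (hmin : ∀ k' < kbar, ∑ k ∈ range (k' + 1), b k < R) :
    (IsRule t (greedyRule b R kbar) ∧ R ≤ ∑ k ∈ range (t + 1), b k * greedyRule b R kbar k) ∧
    ∀ f, IsRule t f → R ≤ ∑ k ∈ range (t + 1), b k * f k →
      ∑ k ∈ range (t + 1), a k * greedyRule b R kbar k ≤ ∑ k ∈ range (t + 1), a k * f k := by
  have hlt : ∑ k ∈ range kbar, b k < R := by
    cases kbar with
    | zero => simpa using hR
    | succ k => exact hmin k k.lt_succ_self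
  have hbkbar : 0 < b kbar := by
    rw [sum_range_succ] at hkbar
    linarith
  have hkt : kbar ≤ t := by
    by_contra! h
    have hsupp : ∑ k ∈ range (t + 1), b k = ∑ k ∈ range (kbar + 1), b k :=
      sum_subset (range_subset_range.2 (by omega))
        fun k _ hk => hb k (by simp only [mem_range] at hk; omega)
    linarith [hmin t h]
  have hbind := sum_mul_greedyRule (R := R) hkt hbkbar.ne'
  exact ⟨⟨greedyRule_isRule hlt hkbar, hbind.ge⟩, fun f hf hbf =>
    sum_mul_greedyRule_le hkt (ha _ hkt) hbkbar hratio hf (hbind.trans_le hbf)⟩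

end FractionalKnapsack

noncomputable def incCoeff (N t : ℕ) (pl ph : ℝ) (k : ℕ) : ℝ :=
  tauD N pl ph * mu N t pl ph k - tauC N pl * lam N t pl k

section Intervention

variable {N t T k m : ℕ} {pl ph : ℝ}

lemma tauC_lt_tauD (hlh : pl < ph) (hpl : pl < 1) : tauC N pl < tauD N pl ph :=
  mul_lt_mul_of_pos_right hlh (pow_pos (sub_pos.2 hpl) _)

lemma lam_nonneg (h0 : 0 ≤ pl) (h1 : pl ≤ 1) : 0 ≤ lam N t pl k :=
  binomWeight_nonneg (pow_nonneg (sub_nonneg.2 h1) _)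
    (pow_le_one₀ (sub_nonneg.2 h1) (by linarith))

lemma incCoeff_of_lt (h : t < k) : incCoeff N t pl ph k = 0 := by
  simp [incCoeff, lam, mu, Nat.choose_eq_zero_of_lt h]

lemma incCoeff_mul_lam_le (h0 : 0 ≤ pl) (hlh : pl ≤ ph) (hph : ph ≤ 1) (hkm : k ≤ m)
    (hmt : m ≤ t) : incCoeff N t pl ph m * lam N t pl k ≤ incCoeff N t pl ph k * lam N t pl m := by
  have hpl1 : 0 ≤ 1 - pl := by linarith
  have hidle : (1 - pl) ^ (N - 1) * (1 - ph) ≤ (1 - pl) ^ N :=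
    calc (1 - pl) ^ (N - 1) * (1 - ph) ≤ (1 - pl) ^ (N - 1 + 1) := by
          rw [pow_succ]; gcongr
      _ ≤ (1 - pl) ^ N := pow_le_pow_of_le_one hpl1 (by linarith) (by omega)
  have hmu : mu N t pl ph m * lam N t pl k ≤ mu N t pl ph k * lam N t pl m :=
    binomWeight_mul_le_mul (mul_nonneg (pow_nonneg hpl1 _) (by linarith)) hidle
      (pow_le_one₀ hpl1 (by linarith)) hkm hmt
  have htauD : 0 ≤ tauD N pl ph := mul_nonneg (by linarith) (pow_nonneg hpl1 _)
  simp only [incCoeff, sub_mul]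
  nlinarith [mul_le_mul_of_nonneg_left hmu htauD]

lemma incentive_iff (htT : t < T) (S : ℝ) :
    ((T : ℝ) - t) / T * S ≥ tauD N pl ph - tauC N pl ↔
      (T : ℝ) / (T - t) * (tauD N pl ph - tauC N pl) ≤ S := by
  have htT' : (t : ℝ) < T := by exact_mod_cast htT
  rw [ge_iff_le, ← div_le_iff₀' (div_pos (by linarith) (by linarith)), div_eq_inv_mul, inv_div]

end Intervention

theorem threshold_rule_optimal_general (N t T : ℕ) (pl ph : ℝ)
    (hpl : pl = 1 / N) (hlh : pl < ph) (hph : ph < 1) (htT : t < T)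
    (kbar : ℕ)
    (hkbar : (((T : ℝ) - t) / T) * ∑ k ∈ Finset.range (kbar + 1),
        (tauD N pl ph * mu N t pl ph k - tauC N pl * lam N t pl k)
      ≥ tauD N pl ph - tauC N pl)
    (hkbarmin : ∀ k' < kbar, (((T : ℝ) - t) / T) * ∑ k ∈ Finset.range (k' + 1),
        (tauD N pl ph * mu N t pl ph k - tauC N pl * lam N t pl k)
      < tauD N pl ph - tauC N pl) :
    Feasible N t T pl ph (thresholdRule N t T pl ph kbar) ∧
    ∀ f : ℕ → ℝ, Feasible N t T pl ph f →
      objective N t pl (thresholdRule N t T pl ph kbar) ≤ objective N t pl f := by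
  have hpl0 : 0 ≤ pl := hpl ▸ by positivity
  have htT' : (t : ℝ) < T := by exact_mod_cast htT
  have hR : 0 < (T : ℝ) / (T - t) * (tauD N pl ph - tauC N pl) :=
    mul_pos (div_pos (by linarith) (by linarith))
      (sub_pos.2 (tauC_lt_tauD hlh (hlh.trans hph)))
  -- `thresholdRule N t T pl ph kbar` unfolds to `greedyRule (incCoeff N t pl ph) R kbar`.
  obtain ⟨⟨hrule, hbind⟩, hopt⟩ := greedyRule_optimal (a := lam N t pl) hR
    (fun _ _ => lam_nonneg hpl0 (hlh.trans hph).le) (fun _ => incCoeff_of_lt)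
    (fun _ _ => incCoeff_mul_lam_le hpl0 hlh.le hph.le) ((incentive_iff htT _).1 hkbar)
    (fun k' hk' => (lt_iff_lt_of_le_iff_le (incentive_iff htT _)).1 (hkbarmin k' hk'))
  exact ⟨⟨hrule, (incentive_iff htT _).2 hbind⟩,
    fun f hf => hopt f hf.1 ((incentive_iff htT _).1 hf.2)⟩

/-- (Proposition 1, optimality) Suppose the linear program is feasible, and let `k̄`
be the smallest `k'` with `((T−t)/T)·Σ_{k ≤ k'} [τ_d μ(k;t) − τ_c λ(k;t)] ≥ τ_d − τ_c`.
Then the threshold rule `f*` associated with `k̄` is an optimal solution of the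
linear program: it is feasible and attains the smallest objective value among all
feasible intervention rules. -/
theorem threshold_rule_optimal (N t T : ℕ) (pl ph : ℝ) (hN : 2 ≤ N)
    (hpl : pl = 1 / N) (hlh : pl < ph) (hph : ph < 1) (ht : 1 ≤ t) (htT : t < T)
    (hfeasLP : ∃ f : ℕ → ℝ, Feasible N t T pl ph f)
    (kbar : ℕ)
    (hkbar : (((T : ℝ) - t) / T) * ∑ k ∈ Finset.range (kbar + 1),
        (tauD N pl ph * mu N t pl ph k - tauC N pl * lam N t pl k)
      ≥ tauD N pl ph - tauC N pl)
    (hkbarmin : ∀ k' < kbar, (((T : ℝ) - t) / T) * ∑ k ∈ Finset.range (k' + 1),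
        (tauD N pl ph * mu N t pl ph k - tauC N pl * lam N t pl k)
      < tauD N pl ph - tauC N pl) :
    Feasible N t T pl ph (thresholdRule N t T pl ph kbar) ∧
    ∀ f : ℕ → ℝ, Feasible N t T pl ph f →
      objective N t pl (thresholdRule N t T pl ph kbar) ≤ objective N t pl f :=
  threshold_rule_optimal_general N t T pl ph hpl hlh hph htT kbar hkbar hkbarmin
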